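/- arXiv:2212.01655 — 3 statements merged into one kernel-verified Lean document; each statement's English description precedes it below -/
import Mathlib

section
/- Let V be a real Hilbert space, Vₙ a finite-dimensional subspace, W a finite-dimensional subspace with β(Vₙ, W) > 0. Then for every ω ∈ W, the affine set ω + W⊥ contains a unique element of minimal distance to Vₙ; more precisely, the map u ↦ dist(u, Vₙ) restricted to ω + W⊥ attains a unique minimizer. -/
/-!
Write `M = S ⊔ K` for `S = Wᗮ` and `K = Vn`; `M` is closed because `K` is finite-dimensional.
For `x ∈ ω + S` and `k ∈ K` the point `(ω - x) + k` lies in `M`, so `dist(x, K) ≥ dist(ω, M)`,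
with equality exactly when `(ω - x) + P_K x` is the orthogonal projection `P_M ω`. Positivity of
the inf-sup constant says `S ⊓ K = 0`, so `P_M ω` splits uniquely as `s + k`, and the unique
minimizer is `ω - s`.
-/

open Metric

namespace Submodule

variable {𝕜 E : Type*} [RCLike 𝕜] [NormedAddCommGroup E] [InnerProductSpace 𝕜 E]

lemma norm_sub_starProjection_le (K : Submodule 𝕜 E) [K.HasOrthogonalProjection] (u : E)
    {v : E} (hv : v ∈ K) : ‖u - K.starProjection u‖ ≤ ‖u - v‖ := by
  rw [starProjection_minimal]
  exact ciInf_le ⟨0, by rintro _ ⟨_, rfl⟩; positivity⟩ (⟨v, hv⟩ : K)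

lemma starProjection_eq_of_norm_sub_le (K : Submodule 𝕜 E) [K.HasOrthogonalProjection]
    {u v : E} (hv : v ∈ K) (h : ‖u - v‖ ≤ ‖u - K.starProjection u‖) :
    K.starProjection u = v := by
  have hmin : ‖u - v‖ = ⨅ w : K, ‖u - w‖ := by
    rw [← starProjection_minimal]
    exact le_antisymm h (K.norm_sub_starProjection_le u hv)
  exact eq_starProjection_of_mem_of_inner_eq_zero hv
    ((K.norm_eq_iInf_iff_inner_eq_zero hv).mp hmin)

lemma infDist_eq_norm_sub_starProjection (K : Submodule 𝕜 E) [K.HasOrthogonalProjection]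
    (x : E) : infDist x (K : Set E) = ‖x - K.starProjection x‖ := by
  rw [infDist_eq_iInf, starProjection_minimal]
  simp only [dist_eq_norm]
  rfl

section Sup

variable {S K : Submodule 𝕜 E} [K.HasOrthogonalProjection] [(S ⊔ K).HasOrthogonalProjection]
  {ω x : E}

lemma norm_sub_starProjection_sup_le_infDist (hx : x - ω ∈ S) :
    ‖ω - (S ⊔ K).starProjection ω‖ ≤ infDist x (K : Set E) := by
  have hmem : (ω - x) + K.starProjection x ∈ S ⊔ K :=
    add_mem_sup (sub_mem_comm_iff.mp hx) (K.starProjection_apply_mem x)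
  calc ‖ω - (S ⊔ K).starProjection ω‖ ≤ ‖ω - ((ω - x) + K.starProjection x)‖ :=
        (S ⊔ K).norm_sub_starProjection_le ω hmem
    _ = infDist x (K : Set E) := by
        rw [K.infDist_eq_norm_sub_starProjection]
        congr 1
        abel

lemma starProjection_sup_eq_of_infDist_le (hx : x - ω ∈ S)
    (h : infDist x (K : Set E) ≤ ‖ω - (S ⊔ K).starProjection ω‖) :
    (S ⊔ K).starProjection ω = (ω - x) + K.starProjection x := by
  refine (S ⊔ K).starProjection_eq_of_norm_sub_le
    (add_mem_sup (sub_mem_comm_iff.mp hx) (K.starProjection_apply_mem x)) ?_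
  calc ‖ω - ((ω - x) + K.starProjection x)‖ = infDist x (K : Set E) := by
        rw [K.infDist_eq_norm_sub_starProjection]
        congr 1
        abel
    _ ≤ _ := h

end Sup

theorem existsUnique_infDist_le_of_disjoint [CompleteSpace E] {S K : Submodule 𝕜 E}
    [FiniteDimensional 𝕜 K]
    (hS : IsClosed (S : Set E)) (hSK : Disjoint S K) (ω : E) :
    ∃! u : E, u - ω ∈ S ∧
      ∀ x : E, x - ω ∈ S → infDist u (K : Set E) ≤ infDist x (K : Set E) := by
  have : CompleteSpace (S ⊔ K : Submodule 𝕜 E) :=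
    (isClosed_sup_finiteDimensional S K hS).completeSpace_coe
  obtain ⟨s, hs, k, hk, hsk⟩ := mem_sup.mp ((S ⊔ K).starProjection_apply_mem ω)
  have hsω : (ω - s) - ω ∈ S := by simpa using S.neg_mem hs
  have hattained : infDist (ω - s) (K : Set E) ≤ ‖ω - (S ⊔ K).starProjection ω‖ :=
    (infDist_le_dist_of_mem hk).trans_eq (by rw [dist_eq_norm, ← hsk]; congr 1; abel)
  refine ⟨ω - s, ⟨hsω, fun x hx ↦ hattained.trans (norm_sub_starProjection_sup_le_infDist hx)⟩,
    fun u ⟨hu, hmin⟩ ↦ ?_⟩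
  have hsplit := starProjection_sup_eq_of_infDist_le hu ((hmin _ hsω).trans hattained)
  have hzero : (ω - u) - s = k - K.starProjection u := by
    rw [← hsk] at hsplit
    linear_combination (norm := abel_nf) -hsplit
  have hmemS : (ω - u) - s ∈ S := S.sub_mem (sub_mem_comm_iff.mp hu) hs
  have hmemK : (ω - u) - s ∈ K := hzero ▸ K.sub_mem hk (K.starProjection_apply_mem u)
  rw [← sub_eq_zero]
  linear_combination (norm := abel_nf) -(disjoint_def.mp hSK _ hmemS hmemK)

end Submodule

section InfSup

variable {𝕜 V : Type*} [RCLike 𝕜] [NormedAddCommGroup V] [InnerProductSpace 𝕜 V]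

noncomputable def infSupConstant (Vn W : Submodule 𝕜 V) [W.HasOrthogonalProjection] : ℝ :=
  ⨅ v : {v : Vn // v ≠ 0}, ‖(W.orthogonalProjectionOnto ((v : Vn) : V) : V)‖ / ‖((v : Vn) : V)‖

lemma disjoint_orthogonal_of_infSupConstant_pos {Vn W : Submodule 𝕜 V}
    [W.HasOrthogonalProjection] (hβ : 0 < infSupConstant Vn W) : Disjoint Wᗮ Vn := by
  refine Submodule.disjoint_def.mpr fun v hvW hvVn ↦ by_contra fun hv ↦ hβ.not_ge ?_
  have hproj : W.orthogonalProjectionOnto v = 0 :=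
    Submodule.orthogonalProjectionOnto_apply_of_mem_orthogonal hvW
  calc infSupConstant Vn W
      ≤ ‖(W.orthogonalProjectionOnto v : V)‖ / ‖v‖ :=
        ciInf_le ⟨0, by rintro _ ⟨_, rfl⟩; positivity⟩
          (⟨⟨v, hvVn⟩, by simpa using hv⟩ : {v : Vn // v ≠ 0})
    _ = 0 := by simp [hproj]

end InfSup

theorem pbdw_unique_minimizer_general
    {V : Type*} [NormedAddCommGroup V] [InnerProductSpace ℝ V] [CompleteSpace V]
    (Vn W : Submodule ℝ V) [FiniteDimensional ℝ Vn] [FiniteDimensional ℝ W]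
    (hβ : 0 < ⨅ v : {v : Vn // v ≠ 0},
        ‖(Submodule.orthogonalProjectionOnto W ((v : Vn) : V) : V)‖ / ‖((v : Vn) : V)‖)
    (ω : V) :
    ∃! u : V, (u - ω ∈ Wᗮ) ∧
      ∀ x : V, x - ω ∈ Wᗮ →
        Metric.infDist u (Vn : Set V) ≤ Metric.infDist x (Vn : Set V) :=
  Submodule.existsUnique_infDist_le_of_disjoint W.isClosed_orthogonal
    (disjoint_orthogonal_of_infSupConstant_pos hβ) ω

theorem pbdw_unique_minimizer
    {V : Type*} [NormedAddCommGroup V] [InnerProductSpace ℝ V] [CompleteSpace V]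
    (Vn W : Submodule ℝ V) [FiniteDimensional ℝ Vn] [FiniteDimensional ℝ W]
    (hβ : 0 < ⨅ v : {v : Vn // v ≠ 0},
        ‖(Submodule.orthogonalProjectionOnto W ((v : Vn) : V) : V)‖ / ‖((v : Vn) : V)‖)
    (ω : V) (hω : ω ∈ W) :
    ∃! u : V, (u - ω ∈ Wᗮ) ∧
      ∀ x : V, x - ω ∈ Wᗮ →
        Metric.infDist u (Vn : Set V) ≤ Metric.infDist x (Vn : Set V) :=
  pbdw_unique_minimizer_general Vn W hβ ω
end

section
/- Let V be a real Hilbert space, Vₙ ⊆ V a finite-dimensional subspace and W a finite-dimensional subspace with β := β(Vₙ, W) > 0. For any u ∈ V, let A(P_W u) denote the PBDW estimator, i.e., the minimizer over P_W u + W⊥ of the distance to Vₙ. Then ‖u − A(P_W u)‖ ≤ β⁻¹ · ‖u − P_{Vₙ} u‖. -/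
/-!
Let `e := u - A (P_W u)`, which lies in `Wᗮ`, and let `Q` be the orthogonal projection onto `Vₙᗮ`.
Minimality of the PBDW estimator along the line `A (P_W u) + t e` forces `Q (A (P_W u)) ⊥ Q e`,
so `‖Q e‖ ≤ ‖Q u‖ = ‖u - P_{Vₙ} u‖` by Pythagoras. On the other hand, for `e ⊥ W` one has
`‖P_{Vₙ} e‖² ≤ (1 - β²) ‖e‖²`, i.e. `β ‖e‖ ≤ ‖Q e‖`.
-/

open scoped RealInnerProductSpace
open Submodule

section

variable {V : Type*} [NormedAddCommGroup V] [InnerProductSpace ℝ V]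

theorem Metric.infDist_submodule_eq_norm_starProjection_orthogonal (K : Submodule ℝ V)
    [K.HasOrthogonalProjection] (x : V) :
    Metric.infDist x K = ‖Kᗮ.starProjection x‖ := by
  simp only [starProjection_orthogonal_val, starProjection_minimal, Metric.infDist_eq_iInf,
    dist_eq_norm]
  rfl

theorem real_inner_eq_zero_of_forall_norm_le_norm_add_smul {r b : V}
    (h : ∀ t : ℝ, ‖r‖ ≤ ‖r + t • b‖) : ⟪r, b⟫ = 0 := by
  have hquad : ∀ t : ℝ, 0 ≤ ‖b‖ ^ 2 * (t * t) + 2 * ⟪r, b⟫ * t + 0 := fun t => by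
    have hsq := pow_le_pow_left₀ (norm_nonneg r) (h t) 2
    rw [norm_add_sq_real, real_inner_smul_right, norm_smul, mul_pow, Real.norm_eq_abs,
      sq_abs] at hsq
    linarith
  have := discrim_le_zero hquad
  rw [discrim] at this
  nlinarith [sq_nonneg ⟪r, b⟫]

theorem inner_starProjection_orthogonal_eq_zero_of_forall_infDist_le {U S : Submodule ℝ V}
    [U.HasOrthogonalProjection] {a : V}
    (hmin : ∀ s ∈ S, Metric.infDist a U ≤ Metric.infDist (a + s) U) {s : V} (hs : s ∈ S) :
    ⟪Uᗮ.starProjection a, Uᗮ.starProjection s⟫ = 0 := by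
  refine real_inner_eq_zero_of_forall_norm_le_norm_add_smul fun t => ?_
  have := hmin (t • s) (S.smul_mem t hs)
  simpa only [Metric.infDist_submodule_eq_norm_starProjection_orthogonal, map_add, map_smul]
    using this

namespace Submodule

noncomputable def infSupConst (U W : Submodule ℝ V) [W.HasOrthogonalProjection] : ℝ :=
  ⨅ v : {v : U // v ≠ 0}, ‖W.starProjection v‖ / ‖(v : V)‖

variable (U W : Submodule ℝ V) [W.HasOrthogonalProjection]

theorem infSupConst_nonneg : 0 ≤ infSupConst U W :=
  Real.iInf_nonneg fun _ => by positivity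

private theorem bddBelow_range_infSupConst :
    BddBelow (Set.range fun v : {v : U // v ≠ 0} => ‖W.starProjection v‖ / ‖(v : V)‖) :=
  ⟨0, by rintro _ ⟨v, rfl⟩; positivity⟩

theorem infSupConst_mul_norm_le {v : V} (hv : v ∈ U) :
    infSupConst U W * ‖v‖ ≤ ‖W.starProjection v‖ := by
  rcases eq_or_ne v 0 with rfl | hv0
  · simp
  · have hle : infSupConst U W ≤ ‖W.starProjection v‖ / ‖v‖ :=
      ciInf_le (bddBelow_range_infSupConst U W) ⟨⟨v, hv⟩, by simpa using hv0⟩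
    rwa [le_div_iff₀ (norm_pos_iff.2 hv0)] at hle

theorem infSupConst_le_one : infSupConst U W ≤ 1 := by
  cases isEmpty_or_nonempty {v : U // v ≠ 0} with
  | inl h => rw [infSupConst, Real.iInf_of_isEmpty]; exact zero_le_one
  | inr h =>
    obtain ⟨v, hv0⟩ := h
    refine (ciInf_le (bddBelow_range_infSupConst U W) ⟨v, hv0⟩).trans ?_
    exact div_le_one_of_le₀ (norm_starProjection_apply_le W v) (norm_nonneg _)

/-- For `e ⊥ W` and a unit vector `v ∈ U`, only `v - P_W v`, of norm at most `√(1 - β²)` with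
`β = infSupConst U W`, contributes to `⟪v, e⟫`. -/
theorem norm_starProjection_sq_le_of_mem_orthogonal [U.HasOrthogonalProjection] {e : V}
    (he : e ∈ Wᗮ) : ‖U.starProjection e‖ ^ 2 ≤ (1 - infSupConst U W ^ 2) * ‖e‖ ^ 2 := by
  set β := infSupConst U W
  set p := U.starProjection e
  have hp : p ∈ U := starProjection_apply_mem U e
  have hinner : ‖p‖ ^ 2 = ⟪Wᗮ.starProjection p, e⟫ := by
    rw [inner_starProjection_left_eq_right, starProjection_eq_self_iff.2 he,
      ← starProjection_eq_self_iff.2 hp, inner_starProjection_left_eq_right,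
      starProjection_eq_self_iff.2 hp, real_inner_self_eq_norm_sq]
  have hperp : ‖Wᗮ.starProjection p‖ ^ 2 ≤ (1 - β ^ 2) * ‖p‖ ^ 2 := by
    have hpyth := norm_sq_eq_add_norm_sq_starProjection p W
    have hβp := pow_le_pow_left₀ (by positivity [infSupConst_nonneg U W])
      (infSupConst_mul_norm_le U W hp) 2
    nlinarith
  have hcs : ‖p‖ ^ 2 ≤ ‖Wᗮ.starProjection p‖ * ‖e‖ := hinner ▸ real_inner_le_norm _ _
  have hβ1 : β ^ 2 ≤ 1 := pow_le_one₀ (infSupConst_nonneg U W) (infSupConst_le_one U W)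
  rcases eq_or_ne p 0 with hp0 | hp0
  · rw [hp0, norm_zero]; nlinarith [sq_nonneg ‖e‖]
  · have hp2 : 0 < ‖p‖ ^ 2 := by positivity
    have : ‖p‖ ^ 2 * ‖p‖ ^ 2 ≤ ‖p‖ ^ 2 * ((1 - β ^ 2) * ‖e‖ ^ 2) := by
      nlinarith [mul_le_mul hcs hcs (by positivity) (by positivity)]
    exact le_of_mul_le_mul_left this hp2

theorem infSupConst_mul_norm_le_norm_starProjection_orthogonal [U.HasOrthogonalProjection]
    {e : V} (he : e ∈ Wᗮ) :
    infSupConst U W * ‖e‖ ≤ ‖Uᗮ.starProjection e‖ := by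
  have hpyth := norm_sq_eq_add_norm_sq_starProjection e U
  have := norm_starProjection_sq_le_of_mem_orthogonal U W he
  refine le_of_sq_le_sq ?_ (norm_nonneg _)
  rw [mul_pow]
  linarith

end Submodule

end

theorem pbdw_error_bound_general
    {V : Type*} [NormedAddCommGroup V] [InnerProductSpace ℝ V]
    (Vn W : Submodule ℝ V) [FiniteDimensional ℝ Vn] [FiniteDimensional ℝ W]
    (β : ℝ)
    (hβdef : β = ⨅ v : {v : Vn // v ≠ 0},
        ‖(Submodule.orthogonalProjection W ((v : Vn) : V) : V)‖ / ‖((v : Vn) : V)‖)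
    (hβ : 0 < β)
    (A : W → V)
    (hA : ∀ ω : W, (A ω - (ω : V) ∈ Wᗮ) ∧
      ∀ x : V, x - (ω : V) ∈ Wᗮ →
        Metric.infDist (A ω) (Vn : Set V) ≤ Metric.infDist x (Vn : Set V))
    (u : V) :
    ‖u - A (Submodule.orthogonalProjection W u)‖ ≤ β⁻¹ * ‖u - (Submodule.orthogonalProjection Vn u : V)‖ := by
  obtain ⟨haW, hmin⟩ := hA (orthogonalProjection W u)
  set a := A (orthogonalProjection W u)
  have hβ' : β = infSupConst Vn W := hβdef
  have he : u - a ∈ Wᗮ := by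
    simpa using Wᗮ.sub_mem (sub_starProjection_mem_orthogonal u) haW
  have horth : ⟪Vnᗮ.starProjection a, Vnᗮ.starProjection (u - a)⟫ = 0 :=
    inner_starProjection_orthogonal_eq_zero_of_forall_infDist_le
      (fun s hs => hmin _ (by simpa [add_sub_right_comm] using Wᗮ.add_mem haW hs)) he
  have hQ : ‖Vnᗮ.starProjection (u - a)‖ ≤ ‖Vnᗮ.starProjection u‖ := by
    have hpyth := norm_add_sq_eq_norm_sq_add_norm_sq_real horth
    rw [← map_add, add_sub_cancel] at hpyth
    exact (mul_self_le_mul_self_iff (norm_nonneg _) (norm_nonneg _)).2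
      (hpyth ▸ le_add_of_nonneg_left (mul_self_nonneg _))
  rw [le_inv_mul_iff₀ hβ, hβ']
  exact (infSupConst_mul_norm_le_norm_starProjection_orthogonal Vn W he).trans
    (by simpa using hQ)

theorem pbdw_error_bound
    {V : Type*} [NormedAddCommGroup V] [InnerProductSpace ℝ V] [CompleteSpace V]
    (Vn W : Submodule ℝ V) [FiniteDimensional ℝ Vn] [FiniteDimensional ℝ W]
    (β : ℝ)
    (hβdef : β = ⨅ v : {v : Vn // v ≠ 0},
        ‖(Submodule.orthogonalProjection W ((v : Vn) : V) : V)‖ / ‖((v : Vn) : V)‖)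
    (hβ : 0 < β)
    (A : W → V)
    (hA : ∀ ω : W, (A ω - (ω : V) ∈ Wᗮ) ∧
      ∀ x : V, x - (ω : V) ∈ Wᗮ →
        Metric.infDist (A ω) (Vn : Set V) ≤ Metric.infDist x (Vn : Set V))
    (u : V) :
    ‖u - A (Submodule.orthogonalProjection W u)‖ ≤ β⁻¹ * ‖u - (Submodule.orthogonalProjection Vn u : V)‖ :=
  pbdw_error_bound_general Vn W β hβdef hβ A hA u
end

section
/- Let V be a real Hilbert space, Vₙ, W finite-dimensional subspaces with β := β(Vₙ, W) > 0, and A the PBDW estimator. Suppose the true state u satisfies dist(u, M) ≤ ε_model for a set M with sup_{v ∈ M} dist(v, Vₙ) ≤ δₙ, and the observation is noisy: ω̃ = P_W u + η with ‖η‖ ≤ ε_noise. Then ‖u − A(ω̃)‖ ≤ β⁻¹ (δₙ + ε_noise + ε_model). -/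
/-!
By the triangle inequality for `infDist`, `u` lies within `δₙ + ε_model` of `Vₙ`. Linearity of `A`
splits the noisy error into the noiseless error `‖u - A (P_W u)‖ ≤ β⁻¹ dist(u, Vₙ)` and the
amplified noise `‖A η‖ ≤ β⁻¹ ‖η‖`.
-/

open Metric

theorem Metric.infDist_le_add_infDist_of_forall_infDist_le {α : Type*} [PseudoMetricSpace α]
    {s t : Set α} (hs : s.Nonempty) {δ : ℝ} (h : ∀ y ∈ s, infDist y t ≤ δ) (x : α) :
    infDist x t ≤ δ + infDist x s := by
  rw [add_comm, ← sub_le_iff_le_add, le_infDist hs]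
  intro y hy
  linarith [infDist_le_infDist_add_dist (x := x) (y := y) (s := t), h y hy]

theorem pbdw_noise_model_error_bound_general
    {V : Type*} [NormedAddCommGroup V] [InnerProductSpace ℝ V]
    (Vn W : Submodule ℝ V) [FiniteDimensional ℝ W]
    (β : ℝ)
    (hβ : 0 < β)
    (A : W →L[ℝ] V)
    (hA1 : ∀ v : V, ‖v - A (W.orthogonalProjectionOnto v)‖ ≤
        β⁻¹ * Metric.infDist v (Vn : Set V))
    (hA2 : ∀ η : W, ‖A η‖ ≤ β⁻¹ * ‖(η : V)‖)
    (M : Set V) (hM : M.Nonempty)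
    (δn ε_model ε_noise : ℝ)
    (hδ : ∀ v ∈ M, Metric.infDist v (Vn : Set V) ≤ δn)
    (u : V) (hu : Metric.infDist u M ≤ ε_model)
    (η : W) (hη : ‖(η : V)‖ ≤ ε_noise) :
    ‖u - A (W.orthogonalProjectionOnto u + η)‖ ≤ β⁻¹ * (δn + ε_noise + ε_model) := by
  have hu_Vn : infDist u Vn ≤ δn + ε_model :=
    (infDist_le_add_infDist_of_forall_infDist_le hM hδ u).trans (by linarith)
  calc ‖u - A (W.orthogonalProjectionOnto u + η)‖
      = ‖(u - A (W.orthogonalProjectionOnto u)) - A η‖ := by rw [map_add, sub_add_eq_sub_sub]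
    _ ≤ ‖u - A (W.orthogonalProjectionOnto u)‖ + ‖A η‖ := norm_sub_le _ _
    _ ≤ β⁻¹ * (δn + ε_model) + β⁻¹ * ε_noise := by
        gcongr
        · exact (hA1 u).trans (by gcongr)
        · exact (hA2 η).trans (by gcongr)
    _ = β⁻¹ * (δn + ε_noise + ε_model) := by ring

theorem pbdw_noise_model_error_bound
    {V : Type*} [NormedAddCommGroup V] [InnerProductSpace ℝ V] [CompleteSpace V]
    (Vn W : Submodule ℝ V) [FiniteDimensional ℝ Vn] [FiniteDimensional ℝ W]
    (β : ℝ)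
    (hβdef : β = ⨅ v : {v : Vn // v ≠ 0},
        ‖(W.orthogonalProjectionOnto ((v : Vn) : V) : V)‖ / ‖((v : Vn) : V)‖)
    (hβ : 0 < β)
    (A : W →L[ℝ] V)
    (hA1 : ∀ v : V, ‖v - A (W.orthogonalProjectionOnto v)‖ ≤
        β⁻¹ * Metric.infDist v (Vn : Set V))
    (hA2 : ∀ η : W, ‖A η‖ ≤ β⁻¹ * ‖(η : V)‖)
    (M : Set V) (hM : M.Nonempty)
    (δn ε_model ε_noise : ℝ)
    (hδ : ∀ v ∈ M, Metric.infDist v (Vn : Set V) ≤ δn)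
    (u : V) (hu : Metric.infDist u M ≤ ε_model)
    (η : W) (hη : ‖(η : V)‖ ≤ ε_noise) :
    ‖u - A (W.orthogonalProjectionOnto u + η)‖ ≤ β⁻¹ * (δn + ε_noise + ε_model) :=
  pbdw_noise_model_error_bound_general Vn W β hβ A hA1 hA2 M hM δn ε_model ε_noise hδ u hu η hη
end
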